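/- arXiv:2602.23256 — 7 statements merged into one kernel-verified Lean document; each statement's English description precedes it below -/
import Mathlib

section
/- Let G be a linearly ordered abelian group, H a convex subgroup, k a nonzero integer, and n ≥ 2 an integer. Then for a ∈ G: a ∈ H + nG if and only if k•a ∈ H + (k·n)G. -/
/-- A convex subgroup of a linearly ordered abelian group. -/
def IsConvexSubgroup {G : Type*} [AddCommGroup G] [LinearOrder G] [IsOrderedAddMonoid G] (H : AddSubgroup G) : Prop :=
  ∀ ⦃x y : G⦄, 0 ≤ x → x ≤ y → y ∈ H → x ∈ H

/-- Membership in the set `H + nG` for an integer `n`. -/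
def memHnZ {G : Type*} [AddCommGroup G] (H : AddSubgroup G) (n : ℤ) (a : G) : Prop :=
  ∃ h ∈ H, ∃ x : G, a = h + n • x

section

variable {G : Type*} [AddCommGroup G]

theorem memHnZ.zsmul {H : AddSubgroup G} {n : ℤ} {a : G} (k : ℤ) (ha : memHnZ H n a) :
    memHnZ H (k * n) (k • a) := by
  obtain ⟨h, hh, x, rfl⟩ := ha
  exact ⟨k • h, H.zsmul_mem hh k, x, by rw [smul_add, mul_zsmul]⟩

variable [LinearOrder G] [IsOrderedAddMonoid G]

theorem abs_le_abs_zsmul {k : ℤ} (hk : k ≠ 0) (g : G) : |g| ≤ |k • g| := by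
  rw [abs_zsmul]
  exact le_smul_of_one_le_left (abs_nonneg g) (Int.one_le_abs hk)

theorem IsConvexSubgroup.mem_of_zsmul_mem {H : AddSubgroup G} (hH : IsConvexSubgroup H)
    {k : ℤ} (hk : k ≠ 0) {g : G} (hg : k • g ∈ H) : g ∈ H :=
  abs_mem_iff.mp <| hH (abs_nonneg g) (abs_le_abs_zsmul hk g) (abs_mem_iff.mpr hg)

theorem IsConvexSubgroup.memHnZ_of_zsmul {H : AddSubgroup G} (hH : IsConvexSubgroup H)
    {k : ℤ} (hk : k ≠ 0) {n : ℤ} {a : G} (ha : memHnZ H (k * n) (k • a)) : memHnZ H n a := by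
  obtain ⟨h, hh, x, hx⟩ := ha
  have hkh : k • (a - n • x) = h := by
    rw [smul_sub, hx, mul_zsmul]
    abel
  exact ⟨a - n • x, hH.mem_of_zsmul_mem hk (hkh ▸ hh), x, by abel⟩

end

theorem stmt5_general {G : Type*} [AddCommGroup G] [LinearOrder G] [IsOrderedAddMonoid G] (H : AddSubgroup G)
    (hH : IsConvexSubgroup H) (k : ℤ) (hk : k ≠ 0) (n : ℤ) (a : G) :
    memHnZ H n a ↔ memHnZ H (k * n) (k • a) :=
  ⟨memHnZ.zsmul k, hH.memHnZ_of_zsmul hk⟩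

theorem stmt5 {G : Type*} [AddCommGroup G] [LinearOrder G] [IsOrderedAddMonoid G] (H : AddSubgroup G)
    (hH : IsConvexSubgroup H) (k : ℤ) (hk : k ≠ 0) (n : ℤ) (hn : 2 ≤ n) (a : G) :
    memHnZ H n a ↔ memHnZ H (k * n) (k • a) :=
  stmt5_general H hH k hk n a
end

section
/- Let G be a linearly ordered abelian group, n ≥ 2, and a, b ∈ G. Then 𝔰ₙ(a + b) ≤ max{𝔰ₙ(a), 𝔰ₙ(b)}, where 𝔰ₙ(x) is the largest convex subgroup H of G with x ∉ H + nG (and ∅, the formal least element, if x ∈ nG), and convex subgroups are ordered by inclusion. -/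
/-- The type of convex subgroups, ordered by inclusion. -/
abbrev ConvexSubgroup (G : Type*) [AddCommGroup G] [LinearOrder G] [IsOrderedAddMonoid G] :=
  {H : AddSubgroup G // IsConvexSubgroup H}

/-- Membership in the set `H + nG`. -/
def memHn {G : Type*} [AddCommGroup G] (H : AddSubgroup G) (n : ℕ) (a : G) : Prop :=
  ∃ h ∈ H, ∃ x : G, a = h + n • x

/-- `IsS n a s` says that `s` (an element of the convex subgroups with a formal least
element `⊥` adjoined) is the value `𝔰ₙ(a)`: it is `⊥` if `a ∈ nG`, and otherwise it is
the largest convex subgroup `H` with `a ∉ H + nG`. -/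
def IsS {G : Type*} [AddCommGroup G] [LinearOrder G] [IsOrderedAddMonoid G] (n : ℕ) (a : G)
    (s : WithBot (ConvexSubgroup G)) : Prop :=
  ((∃ x : G, a = n • x) ∧ s = ⊥) ∨
  (¬ (∃ x : G, a = n • x) ∧ ∃ H : ConvexSubgroup G, s = ↑H ∧ ¬ memHn H.1 n a ∧
      ∀ H' : ConvexSubgroup G, ¬ memHn H'.1 n a → H' ≤ H)

theorem memHn_nsmul {G : Type*} [AddCommGroup G] (H : AddSubgroup G) (n : ℕ) (x : G) :
    memHn H n (n • x) :=
  ⟨0, H.zero_mem, x, (zero_add _).symm⟩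

theorem memHn.add {G : Type*} [AddCommGroup G] {H : AddSubgroup G} {n : ℕ} {a b : G}
    (ha : memHn H n a) (hb : memHn H n b) : memHn H n (a + b) := by
  obtain ⟨h, hH, x, rfl⟩ := ha
  obtain ⟨h', hH', y, rfl⟩ := hb
  exact ⟨h + h', H.add_mem hH hH', x + y, by rw [smul_add]; abel⟩

theorem IsS.coe_le_of_not_memHn {G : Type*} [AddCommGroup G] [LinearOrder G] [IsOrderedAddMonoid G]
    {n : ℕ} {c : G} {s : WithBot (ConvexSubgroup G)} (hs : IsS n c s) {H : ConvexSubgroup G}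
    (hH : ¬ memHn H.1 n c) : (H : WithBot (ConvexSubgroup G)) ≤ s := by
  rcases hs with ⟨⟨x, rfl⟩, -⟩ | ⟨-, K, rfl, -, hmax⟩
  · exact absurd (memHn_nsmul H.1 n x) hH
  · exact WithBot.coe_le_coe.2 (hmax H hH)

theorem stmt7_general {G : Type*} [AddCommGroup G] [LinearOrder G] [IsOrderedAddMonoid G] (n : ℕ) (a b : G)
    (sa sb sab : WithBot (ConvexSubgroup G))
    (ha : IsS n a sa) (hb : IsS n b sb) (hab : IsS n (a + b) sab) :
    sab ≤ sa ∨ sab ≤ sb := by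
  rcases hab with ⟨-, rfl⟩ | ⟨-, H, rfl, hH, -⟩
  · exact Or.inl bot_le
  by_cases haH : memHn H.1 n a
  · have hbH : ¬ memHn H.1 n b := fun hbH => hH (haH.add hbH)
    exact Or.inr (hb.coe_le_of_not_memHn hbH)
  · exact Or.inl (ha.coe_le_of_not_memHn haH)

/-- `𝔰ₙ(a + b) ≤ max {𝔰ₙ(a), 𝔰ₙ(b)}` (the convex subgroups being linearly ordered,
being at most the max means being `≤` one of the two). -/
theorem stmt7 {G : Type*} [AddCommGroup G] [LinearOrder G] [IsOrderedAddMonoid G] (n : ℕ) (hn : 2 ≤ n) (a b : G)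
    (sa sb sab : WithBot (ConvexSubgroup G))
    (ha : IsS n a sa) (hb : IsS n b sb) (hab : IsS n (a + b) sab) :
    sab ≤ sa ∨ sab ≤ sb :=
  stmt7_general n a b sa sb sab ha hb hab
end

section
/- Let G be a linearly ordered abelian group, m, n ≥ 2 integers, and a ∈ G. Then 𝔰ₙ(a) = 𝔰_{mn}(m•a). -/
/-
Every convex subgroup `H`, and also `H = 0` since `G` is torsion-free, is closed under `m`-th roots
(`|b| ≤ m • |b| = |m • b|`). Hence `a = h + n • x` with `h ∈ H` iff `m • a = m • h + (m * n) • x`,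
so `a ∈ H + nG ↔ m • a ∈ H + mnG` for all these `H`, and both sides are defined by the same data.
-/

section

variable {G : Type*} [AddCommGroup G]

lemma memHn_bot_iff {n : ℕ} {a : G} : memHn ⊥ n a ↔ ∃ x : G, a = n • x := by
  simp [memHn]

lemma memHn_mul_nsmul_iff {H : AddSubgroup G} {m n : ℕ} (hroot : ∀ b, m • b ∈ H → b ∈ H)
    (a : G) : memHn H (m * n) (m • a) ↔ memHn H n a := by
  constructor
  · rintro ⟨h, hh, x, hx⟩
    have hmul : m • (a - n • x) = h := by rw [smul_sub, ← mul_nsmul', hx]; abel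
    exact ⟨a - n • x, hroot _ (hmul ▸ hh), x, by abel⟩
  · rintro ⟨h, hh, x, rfl⟩
    exact ⟨m • h, H.nsmul_mem hh m, x, by rw [smul_add, mul_nsmul']⟩

end

section

variable {G : Type*} [AddCommGroup G] [LinearOrder G] [IsOrderedAddMonoid G]

lemma IsConvexSubgroup.mem_of_nsmul_mem {H : AddSubgroup G} (hH : IsConvexSubgroup H) {m : ℕ}
    (hm : m ≠ 0) {b : G} (hb : m • b ∈ H) : b ∈ H := by
  have habs : |b| ≤ |m • b| := by
    rw [abs_nsmul]
    exact le_self_nsmul (abs_nonneg b) hm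
  exact abs_mem_iff.mp (hH (abs_nonneg b) habs (abs_mem_iff.mpr hb))

lemma exists_mul_nsmul_eq_nsmul_iff {m n : ℕ} (hm : m ≠ 0) (a : G) :
    (∃ x : G, m • a = (m * n) • x) ↔ ∃ x : G, a = n • x := by
  simp only [← memHn_bot_iff]
  refine memHn_mul_nsmul_iff (fun b hb => ?_) a
  rw [AddSubgroup.mem_bot] at hb ⊢
  exact (nsmul_eq_zero_iff.mp hb).resolve_right hm

lemma IsS.unique {n k : ℕ} {a b : G} {u v : WithBot (ConvexSubgroup G)}
    (hdiv : (∃ x : G, a = n • x) ↔ ∃ x : G, b = k • x)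
    (hmem : ∀ H : ConvexSubgroup G, memHn H.1 n a ↔ memHn H.1 k b)
    (hu : IsS n a u) (hv : IsS k b v) : u = v := by
  rcases hu with ⟨ha, rfl⟩ | ⟨ha, H, rfl, hH, hmax⟩ <;>
    rcases hv with ⟨hb, rfl⟩ | ⟨hb, H', rfl, hH', hmax'⟩
  · rfl
  · exact absurd (hdiv.mp ha) hb
  · exact absurd (hdiv.mpr hb) ha
  · exact congrArg _ <|
      le_antisymm (hmax' H ((hmem H).not.mp hH)) (hmax H' ((hmem H').not.mpr hH'))

end

theorem stmt10_general {G : Type*} [AddCommGroup G] [LinearOrder G] [IsOrderedAddMonoid G] (m n : ℕ) (hm : 2 ≤ m)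
    (a : G) (u v : WithBot (ConvexSubgroup G))
    (hu : IsS n a u) (hv : IsS (m * n) (m • a) v) :
    u = v := by
  have hm0 : m ≠ 0 := by omega
  refine hu.unique (exists_mul_nsmul_eq_nsmul_iff hm0 a).symm (fun H => ?_) hv
  exact (memHn_mul_nsmul_iff (fun _ => H.2.mem_of_nsmul_mem hm0) a).symm

theorem stmt10 {G : Type*} [AddCommGroup G] [LinearOrder G] [IsOrderedAddMonoid G] (m n : ℕ) (hm : 2 ≤ m) (hn : 2 ≤ n)
    (a : G) (u v : WithBot (ConvexSubgroup G))
    (hu : IsS n a u) (hv : IsS (m * n) (m • a) v) :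
    u = v :=
  stmt10_general m n hm a u v hu hv
end

section
/- Let G be a linearly ordered abelian group, p a prime, r ≥ 1, and a ∈ G. Then there exists a' ∈ G such that 𝔰ₚ(a') = 𝔰_{p^r}(a). -/
/-!
Let `H = 𝔰_{n^k}(a)` with `a ∉ n^k G`, and let `i < k` be largest with `a = h + n^i x`, `h ∈ H`.
Then `𝔰ₙ(x) = H`: maximality of `i` gives `x ∉ H + nG`. Conversely, a convex subgroup `H' ⊋ H`
satisfies `a = h' + n^k y` with `h' ∈ H'`, so `n^i (x - n^(k-i) y) = h' - h ∈ H'`; as convex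
subgroups are closed under division, `x ∈ H' + nG`.
-/

section memHn

variable {G : Type*} [AddCommGroup G]

theorem memHn_one (H : AddSubgroup G) (a : G) : memHn H 1 a :=
  ⟨0, H.zero_mem, a, by simp⟩

theorem memHn.add_nsmul {H : AddSubgroup G} {m n : ℕ} {h x : G} (hh : h ∈ H) (hx : memHn H n x) :
    memHn H (m * n) (h + m • x) := by
  obtain ⟨h', hh', y, rfl⟩ := hx
  exact ⟨h + m • h', H.add_mem hh (H.nsmul_mem hh' m), y, by rw [smul_add, mul_smul, add_assoc]⟩

theorem exists_memHn_pow_not_memHn_pow_succ {H : AddSubgroup G} {n k : ℕ} {a : G}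
    (ha : ¬ memHn H (n ^ k) a) : ∃ i < k, memHn H (n ^ i) a ∧ ¬ memHn H (n ^ (i + 1)) a := by
  induction k with
  | zero => exact absurd (memHn_one H a) (by simpa using ha)
  | succ k ih =>
    by_cases hk : memHn H (n ^ k) a
    · exact ⟨k, k.lt_succ_self, hk, ha⟩
    · obtain ⟨i, hik, hi⟩ := ih hk
      exact ⟨i, hik.trans k.lt_succ_self, hi⟩

end memHn

namespace IsConvexSubgroup

variable {G : Type*} [AddCommGroup G] [LinearOrder G] [IsOrderedAddMonoid G] {H H' : AddSubgroup G}

theorem abs_mem (hH : IsConvexSubgroup H) {x y : G} (hxy : |x| ≤ |y|) (hy : y ∈ H) : x ∈ H :=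
  abs_mem_iff.mp (hH (abs_nonneg x) hxy (abs_mem_iff.mpr hy))

theorem le_total (hH : IsConvexSubgroup H) (hH' : IsConvexSubgroup H') : H ≤ H' ∨ H' ≤ H := by
  by_contra! hc
  obtain ⟨x, hx, hx'⟩ := SetLike.not_le_iff_exists.mp hc.1
  obtain ⟨y, hy, hy'⟩ := SetLike.not_le_iff_exists.mp hc.2
  rcases _root_.le_total |x| |y| with hxy | hyx
  · exact hx' (hH'.abs_mem hxy hy)
  · exact hy' (hH.abs_mem hyx hx)

theorem mem_of_nsmul_mem_s12 (hH : IsConvexSubgroup H) {n : ℕ} (hn : n ≠ 0) {z : G} (h : n • z ∈ H) :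
    z ∈ H :=
  hH.abs_mem (by rw [abs_nsmul]; exact le_self_nsmul (abs_nonneg z) hn) h

end IsConvexSubgroup

theorem isS_of_eq_add_pow_nsmul {G : Type*} [AddCommGroup G] [LinearOrder G] [IsOrderedAddMonoid G]
    {n k i : ℕ} {a h x : G} {H : ConvexSubgroup G}
    (hHmax : ∀ H' : ConvexSubgroup G, ¬ memHn H'.1 (n ^ k) a → H' ≤ H)
    (hik : i < k) (hh : h ∈ H.1) (hax : a = h + n ^ i • x) (hsucc : ¬ memHn H.1 (n ^ (i + 1)) a) :
    IsS n x H := by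
  have hx : ¬ memHn H.1 n x := fun hx ↦ hsucc (hax ▸ pow_succ n i ▸ hx.add_nsmul hh)
  refine .inr ⟨fun ⟨y, hy⟩ ↦ hx ⟨0, H.1.zero_mem, y, by rw [hy, zero_add]⟩, H, rfl, hx, ?_⟩
  intro H' hH'x
  by_contra hH'
  have hHH' : H.1 ≤ H'.1 := (H.2.le_total H'.2).resolve_right hH'
  obtain ⟨h', hh', y, hay⟩ : memHn H'.1 (n ^ k) a := by_contra fun ha ↦ hH' (hHmax H' ha)
  have hpow : n ^ i ≠ 0 := by
    rintro hi
    exact hsucc ⟨h, hh, 0, by rw [hax, hi, zero_smul, smul_zero]⟩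
  obtain ⟨j, rfl⟩ := Nat.exists_eq_add_of_lt hik
  have hdiff : n ^ i • (x - n ^ (j + 1) • y) = h' - h := by
    rw [smul_sub, smul_smul, ← pow_add, ← add_assoc, eq_sub_of_add_eq' hax.symm,
      eq_sub_of_add_eq' hay.symm]
    abel
  have hmem : x - n ^ (j + 1) • y ∈ H'.1 :=
    H'.2.mem_of_nsmul_mem_s12 hpow (hdiff ▸ H'.1.sub_mem hh' (hHH' hh))
  exact hH'x ⟨_, hmem, n ^ j • y, by rw [smul_smul, ← pow_succ', sub_add_cancel]⟩

theorem stmt12_general {G : Type*} [AddCommGroup G] [LinearOrder G] [IsOrderedAddMonoid G] (p r : ℕ)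
    (a : G) (v : WithBot (ConvexSubgroup G)) (hv : IsS (p ^ r) a v) :
    ∃ a' : G, IsS p a' v := by
  rcases hv with ⟨-, rfl⟩ | ⟨-, H, rfl, hHa, hHmax⟩
  · exact ⟨0, .inl ⟨⟨0, (smul_zero p).symm⟩, rfl⟩⟩
  · obtain ⟨i, hir, ⟨h, hh, x, hax⟩, hsucc⟩ := exists_memHn_pow_not_memHn_pow_succ hHa
    exact ⟨x, isS_of_eq_add_pow_nsmul hHmax hir hh hax hsucc⟩

theorem stmt12 {G : Type*} [AddCommGroup G] [LinearOrder G] [IsOrderedAddMonoid G] (p r : ℕ) (hp : p.Prime) (hr : 1 ≤ r)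
    (a : G) (v : WithBot (ConvexSubgroup G)) (hv : IsS (p ^ r) a v) :
    ∃ a' : G, IsS p a' v :=
  stmt12_general p r a v hv
end

section
/- Let G be a linearly ordered abelian group, n ≥ 2, and a ∈ G. Then 𝔰ₙ(a) = max over primes p dividing n of 𝔰_{p^{v_p(n)}}(a), where v_p(n) is the p-adic valuation of n. -/
/-!
An element lies in `H + nG` iff it lies in `H + p^{v_p(n)}G` for every prime `p ∣ n`: one direction
because `p^{v_p(n)} ∣ n`, the other by Bézout, since the prime-power parts of `n` are pairwise
coprime. As `𝔰ₙ(a)` is characterised by `H ≤ 𝔰ₙ(a) ↔ a ∉ H + nG`, the convex subgroups below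
`𝔰ₙ(a)` are exactly those below some `𝔰_{p^{v_p(n)}}(a)`, and this forces `𝔰ₙ(a)` to be the maximum.
-/

section memHn

variable {G : Type*} [AddCommGroup G] {H K : AddSubgroup G} {m n : ℕ} {a : G}

lemma memHn_mono (hHK : H ≤ K) : memHn H n a → memHn K n a :=
  fun ⟨h, hh, x, hx⟩ => ⟨h, hHK hh, x, hx⟩

lemma memHn_of_eq_nsmul {x : G} (hx : a = n • x) : memHn H n a :=
  ⟨0, H.zero_mem, x, by rw [hx, zero_add]⟩

lemma memHn_of_dvd (hmn : m ∣ n) : memHn H n a → memHn H m a := by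
  rintro ⟨h, hh, x, rfl⟩
  obtain ⟨c, rfl⟩ := hmn
  exact ⟨h, hh, c • x, by rw [mul_smul]⟩

lemma memHn_mul_of_coprime (hmn : m.Coprime n) (hm : memHn H m a) (hn : memHn H n a) :
    memHn H (m * n) a := by
  obtain ⟨h, hh, x, hx⟩ := hm
  obtain ⟨k, hk, y, hy⟩ := hn
  obtain ⟨u, v, huv⟩ := Nat.isCoprime_iff_coprime.mpr hmn
  refine ⟨(u * m) • k + (v * n) • h, add_mem (zsmul_mem hk _) (zsmul_mem hh _), u • y + v • x, ?_⟩
  rw [← natCast_zsmul] at hx hy ⊢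
  have hbezout : (u * (m : ℤ) + v * n) • a = a := by rw [huv, one_smul]
  push_cast
  linear_combination (norm := module) (u * (m : ℤ)) • hy + (v * (n : ℤ)) • hx - hbezout

lemma memHn_prod_prime_pow {s : Finset ℕ} (hs : ∀ p ∈ s, p.Prime) (k : ℕ → ℕ)
    (h : ∀ p ∈ s, memHn H (p ^ k p) a) : memHn H (∏ p ∈ s, p ^ k p) a := by
  induction s using Finset.induction_on with
  | empty => exact memHn_of_eq_nsmul (one_smul ℕ a).symm
  | insert p s hps ih =>
    rw [Finset.forall_mem_insert] at hs h
    rw [Finset.prod_insert hps]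
    have hcop : (p ^ k p).Coprime (∏ q ∈ s, q ^ k q) :=
      Nat.Coprime.prod_right fun q hq =>
        Nat.coprime_pow_primes _ _ hs.1 (hs.2 q hq) (ne_of_mem_of_not_mem hq hps).symm
    exact memHn_mul_of_coprime hcop h.1 (ih hs.2 h.2)

lemma memHn_iff_forall_prime_pow (hn : n ≠ 0) :
    memHn H n a ↔ ∀ p : ℕ, p.Prime → p ∣ n → memHn H (p ^ n.factorization p) a := by
  refine ⟨fun ha p _ _ => memHn_of_dvd (Nat.ordProj_dvd n p) ha, fun ha => ?_⟩
  rw [Nat.prod_primeFactors_pow_factorization hn]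
  exact memHn_prod_prime_pow (fun p hp => Nat.prime_of_mem_primeFactors hp) _
    fun p hp => ha p (Nat.prime_of_mem_primeFactors hp) (Nat.dvd_of_mem_primeFactors hp)

end memHn

lemma IsS.coe_le_iff {G : Type*} [AddCommGroup G] [LinearOrder G] [IsOrderedAddMonoid G] {n : ℕ}
    {a : G} {s : WithBot (ConvexSubgroup G)} (hs : IsS n a s) (H : ConvexSubgroup G) :
    (H : WithBot (ConvexSubgroup G)) ≤ s ↔ ¬ memHn H.1 n a := by
  rcases hs with ⟨⟨x, hx⟩, rfl⟩ | ⟨-, K, rfl, hK, hmax⟩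
  · exact iff_of_false (WithBot.not_coe_le_bot H) (not_not.mpr (memHn_of_eq_nsmul hx))
  · exact WithBot.coe_le_coe.trans ⟨fun hHK hH => hK (memHn_mono hHK hH), hmax H⟩

lemma WithBot.isGreatest_image_of_forall_coe_le_iff {α ι : Type*} [PartialOrder α] {s : Set ι}
    {f : ι → WithBot α} {u : WithBot α}
    (h : ∀ b : α, (b : WithBot α) ≤ u ↔ ∃ i ∈ s, (b : WithBot α) ≤ f i) (hs : s.Nonempty) :
    IsGreatest (f '' s) u := by
  have hle : ∀ i ∈ s, f i ≤ u := by
    intro i hi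
    cases hfi : f i with
    | bot => exact bot_le
    | coe b => exact (h b).mpr ⟨i, hi, hfi.ge⟩
  refine ⟨?_, Set.forall_mem_image.mpr hle⟩
  cases u with
  | bot =>
    obtain ⟨i, hi⟩ := hs
    exact ⟨i, hi, le_bot_iff.mp (hle i hi)⟩
  | coe b =>
    obtain ⟨i, hi, hbi⟩ := (h b).mp le_rfl
    exact ⟨i, hi, (hle i hi).antisymm hbi⟩

/-- `𝔰ₙ(a) = max_{p prime, p ∣ n} 𝔰_{p^{v_p(n)}}(a)`. -/
theorem stmt13 {G : Type*} [AddCommGroup G] [LinearOrder G] [IsOrderedAddMonoid G] (n : ℕ) (hn : 2 ≤ n) (a : G)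
    (u : WithBot (ConvexSubgroup G)) (hu : IsS n a u)
    (f : ℕ → WithBot (ConvexSubgroup G))
    (hf : ∀ p : ℕ, p.Prime → p ∣ n → IsS (p ^ (n.factorization p)) a (f p)) :
    (∀ p : ℕ, p.Prime → p ∣ n → f p ≤ u) ∧ (∃ p : ℕ, p.Prime ∧ p ∣ n ∧ f p = u) := by
  have hcoe_le : ∀ H : ConvexSubgroup G, (H : WithBot (ConvexSubgroup G)) ≤ u ↔
      ∃ p ∈ {p : ℕ | p.Prime ∧ p ∣ n}, (H : WithBot (ConvexSubgroup G)) ≤ f p := by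
    intro H
    rw [hu.coe_le_iff, memHn_iff_forall_prime_pow (by omega)]
    push Not
    exact exists_congr fun p =>
      ⟨fun ⟨hp, hpn, hH⟩ => ⟨⟨hp, hpn⟩, ((hf p hp hpn).coe_le_iff H).mpr hH⟩,
        fun ⟨⟨hp, hpn⟩, hH⟩ => ⟨hp, hpn, ((hf p hp hpn).coe_le_iff H).mp hH⟩⟩
  obtain ⟨⟨p, ⟨hp, hpn⟩, hfp⟩, hub⟩ := WithBot.isGreatest_image_of_forall_coe_le_iff hcoe_le
    ⟨n.minFac, Nat.minFac_prime (by omega), Nat.minFac_dvd n⟩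
  exact ⟨fun q hq hqn => hub ⟨q, ⟨hq, hqn⟩, rfl⟩, p, hp, hpn, hfp⟩
end

section
/- Let G be a linearly ordered abelian group, n ≥ 2, and H a convex subgroup of G. Define H^{[m]} = ⋂_{H' ⊋ H convex} (H' + mG). Then H^{[m]} = ⋂_{H' ∈ 𝒮ₘ, H' ⊋ H} (H' + mG), where 𝒮ₘ is the image of 𝔰ₘ on G \ mG. -/
theorem IsS.exists_ge_of_not_memHn {G : Type*} [AddCommGroup G] [LinearOrder G]
    [IsOrderedAddMonoid G] {n : ℕ} {a : G} {s : WithBot (ConvexSubgroup G)} (hs : IsS n a s)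
    {H : ConvexSubgroup G} (ha : ¬ memHn H.1 n a) :
    ∃ K : ConvexSubgroup G, s = K ∧ H ≤ K ∧ ¬ memHn K.1 n a := by
  rcases hs with ⟨⟨x, rfl⟩, -⟩ | ⟨-, K, hsK, hKa, hK_max⟩
  · exact absurd (memHn_nsmul H.1 n x) ha
  · exact ⟨K, hsK, hK_max H ha, hKa⟩

theorem stmt16_general {G : Type*} [AddCommGroup G] [LinearOrder G] [IsOrderedAddMonoid G] (m : ℕ)
    (s : G → WithBot (ConvexSubgroup G)) (hs : ∀ a : G, IsS m a (s a))
    (H : ConvexSubgroup G) :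
    {a : G | ∀ H' : ConvexSubgroup G, H < H' → memHn H'.1 m a}
      = {a : G | ∀ H' : ConvexSubgroup G, H < H' → (∃ b : G, s b = ↑H') → memHn H'.1 m a} := by
  ext a
  constructor
  · exact fun h H' hH' _ => h H' hH'
  · intro h H' hH'
    by_contra ha
    -- `𝔰ₘ(a)` lies in `𝒮ₘ`, contains `H'`, and still misses `a`.
    obtain ⟨K, hsK, hH'K, hKa⟩ := (hs a).exists_ge_of_not_memHn ha
    exact hKa (h K (hH'.trans_le hH'K) ⟨a, hsK⟩)

/-- `H^{[m]} = ⋂_{H' ∈ 𝒮ₘ, H' ⊋ H} (H' + mG)`. -/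
theorem stmt16 {G : Type*} [AddCommGroup G] [LinearOrder G] [IsOrderedAddMonoid G] (m : ℕ) (hm : 2 ≤ m)
    (s : G → WithBot (ConvexSubgroup G)) (hs : ∀ a : G, IsS m a (s a))
    (H : ConvexSubgroup G) :
    {a : G | ∀ H' : ConvexSubgroup G, H < H' → memHn H'.1 m a}
      = {a : G | ∀ H' : ConvexSubgroup G, H < H' → (∃ b : G, s b = ↑H') → memHn H'.1 m a} :=
  stmt16_general m s hs H
end

section
/- Let G be a linearly ordered abelian group, n ≥ 2, and suppose 𝒮ₙ \ {∅} is finite, listed as H₁ ⊊ H₂ ⊊ … ⊊ Hₘ. Then the cardinality of G/nG equals the product over i = 1,…,m of the cardinalities of the ribs R_{Hᵢ} = {a : 𝔰ₙ(a) ≤ Hᵢ} / {a : 𝔰ₙ(a) < Hᵢ}. -/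
/-- The subgroup `nG = {n • a : a ∈ G}`. -/
def mulSub (G : Type*) [AddCommGroup G] (n : ℕ) : AddSubgroup G where
  carrier := {x : G | ∃ a : G, x = n • a}
  zero_mem' := ⟨0, by simp⟩
  add_mem' := by rintro x y ⟨a, rfl⟩ ⟨b, rfl⟩; exact ⟨a + b, by rw [smul_add]⟩
  neg_mem' := by rintro x ⟨a, rfl⟩; exact ⟨-a, by rw [smul_neg]⟩

theorem memHn_iff_mem_sup {G : Type*} [AddCommGroup G] {K : AddSubgroup G} {n : ℕ} {a : G} :
    memHn K n a ↔ a ∈ K ⊔ mulSub G n := by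
  rw [AddSubgroup.mem_sup]
  constructor
  · rintro ⟨h, hh, x, rfl⟩
    exact ⟨h, hh, _, ⟨x, rfl⟩, rfl⟩
  · rintro ⟨h, hh, _, ⟨x, rfl⟩, rfl⟩
    exact ⟨h, hh, x, rfl⟩

section ConvexSubgroup

variable {G : Type*} [AddCommGroup G] [LinearOrder G] [IsOrderedAddMonoid G]

theorem ConvexSubgroup.le_total (K K' : ConvexSubgroup G) : K ≤ K' ∨ K' ≤ K := by
  refine or_iff_not_imp_left.2 fun h y hy => ?_
  obtain ⟨x, hxK, hxK'⟩ := SetLike.not_le_iff_exists.1 (show ¬K.1 ≤ K'.1 from h)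
  have hyx : |y| ≤ |x| := le_of_not_ge fun hxy =>
    hxK' (abs_mem_iff.1 (K'.2 (abs_nonneg x) hxy (abs_mem_iff.2 hy)))
  exact abs_mem_iff.1 (K.2 (abs_nonneg y) hyx (abs_mem_iff.2 hxK))

variable {n : ℕ} {a : G} {sa : WithBot (ConvexSubgroup G)}

theorem IsS.mem_sup_iff_lt (hsa : IsS n a sa) (K : ConvexSubgroup G) :
    a ∈ K.1 ⊔ mulSub G n ↔ sa < K := by
  rcases hsa with ⟨⟨x, rfl⟩, rfl⟩ | ⟨-, H₀, rfl, hnm, hmax⟩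
  · exact iff_of_true (AddSubgroup.mem_sup_right ⟨x, rfl⟩) (WithBot.bot_lt_coe _)
  rw [WithBot.coe_lt_coe, ← memHn_iff_mem_sup]
  refine ⟨fun hm => ?_, fun hlt => not_not.1 fun hm => hlt.not_ge (hmax K hm)⟩
  rcases ConvexSubgroup.le_total K H₀ with hle | hle
  · obtain ⟨h, hh, x, hx⟩ := hm
    exact absurd ⟨h, hle hh, x, hx⟩ hnm
  · exact hle.lt_of_ne fun heq => hnm (heq ▸ hm)

theorem IsS.mem_mulSub_iff (hsa : IsS n a sa) : a ∈ mulSub G n ↔ sa = ⊥ := by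
  show (∃ x, a = n • x) ↔ _
  rcases hsa with ⟨hx, rfl⟩ | ⟨hnx, H₀, rfl, -⟩ <;> simp [*]

end ConvexSubgroup

namespace AddSubgroup

variable {G : Type*} [AddGroup G]

theorem relIndex_eq_prod_range {C : ℕ → AddSubgroup G} (hC : Monotone C) (m : ℕ) :
    (C 0).relIndex (C m) = ∏ i ∈ Finset.range m, (C i).relIndex (C (i + 1)) := by
  induction m with
  | zero => simp
  | succ m ih =>
    rw [Finset.prod_range_succ, ← ih, relIndex_mul_relIndex _ _ _ (hC m.zero_le) (hC m.le_succ)]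

theorem index_eq_prod_range {C : ℕ → AddSubgroup G} (hC : Monotone C) {m : ℕ} (hm : C m = ⊤) :
    (C 0).index = ∏ i ∈ Finset.range m, (C i).relIndex (C (i + 1)) := by
  rw [← relIndex_eq_prod_range hC, hm, relIndex_top_right]

theorem card_quot_sub_mem_eq_relIndex {G : Type*} [AddCommGroup G] (A B : AddSubgroup G) :
    Nat.card (Quot fun a b : B => (a - b : G) ∈ A) = A.relIndex B :=
  Nat.card_congr <| Quot.congrRight fun a b => by
    rw [QuotientAddGroup.leftRel_apply, mem_addSubgroupOf, ← neg_mem_iff]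
    simp [sub_eq_add_neg, add_comm]

end AddSubgroup

section Filtration

variable {G Γ : Type*} [AddCommGroup G] {L : Γ → AddSubgroup G} {m : ℕ} {H : Fin m → Γ}

/-- `⋂_{i ≥ j} G_{<Hᵢ}`, which is `G_{<H_j}` for `j < m` and `G` for `j ≥ m`. -/
def ribChain (L : Γ → AddSubgroup G) (H : Fin m → Γ) (j : ℕ) : AddSubgroup G :=
  ⨅ (i : Fin m) (_ : j ≤ (i : ℕ)), L (H i)

theorem ribChain_monotone : Monotone (ribChain L H) := fun _ _ hjk =>
  iInf_mono fun _ => iInf_mono' fun hk => ⟨hjk.trans hk, le_rfl⟩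

theorem ribChain_eq_top {j : ℕ} (hj : m ≤ j) : ribChain L H j = ⊤ :=
  iInf_eq_top.2 fun i => iInf_eq_top.2 fun hi => absurd (hj.trans hi) (not_le.2 i.2)

variable [Preorder Γ] {s : G → WithBot Γ}

theorem mem_ribChain (hL : ∀ K a, a ∈ L K ↔ s a < K) {j : ℕ} {a : G} :
    a ∈ ribChain L H j ↔ ∀ i : Fin m, j ≤ i → s a < H i := by
  simp [ribChain, AddSubgroup.mem_iInf, hL]

theorem mem_ribChain_zero (hL : ∀ K a, a ∈ L K ↔ s a < K)
    (hcover : ∀ a, s a ≠ ⊥ → ∃ i, s a = H i) {a : G} : a ∈ ribChain L H 0 ↔ s a = ⊥ := by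
  rw [mem_ribChain hL]
  refine ⟨fun ha => by_contra fun hne => ?_, fun ha i _ => ha ▸ WithBot.bot_lt_coe _⟩
  obtain ⟨i, hi⟩ := hcover a hne
  exact (ha i (Nat.zero_le i)).ne hi

theorem mem_ribChain_fin (hL : ∀ K a, a ∈ L K ↔ s a < K) (hH : Monotone H) (i : Fin m) {a : G} :
    a ∈ ribChain L H i ↔ s a < H i := by
  rw [mem_ribChain hL]
  exact ⟨fun ha => ha i le_rfl, fun ha j hj => ha.trans_le (WithBot.coe_le_coe.2 (hH hj))⟩

theorem mem_ribChain_succ (hL : ∀ K a, a ∈ L K ↔ s a < K)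
    (hcover : ∀ a, s a ≠ ⊥ → ∃ i, s a = H i) (hH : StrictMono H) (i : Fin m) {a : G} :
    a ∈ ribChain L H (i + 1) ↔ s a ≤ H i := by
  rw [mem_ribChain hL]
  refine ⟨fun ha => ?_, fun ha j hj => ha.trans_lt (WithBot.coe_lt_coe.2 (hH hj))⟩
  obtain hbot | hne := eq_or_ne (s a) ⊥
  · exact hbot ▸ bot_le
  obtain ⟨k, hk⟩ := hcover a hne
  obtain hki | hik := le_or_gt k i
  · exact hk ▸ WithBot.coe_le_coe.2 (hH.monotone hki)
  · exact absurd (ha k hik) (hk ▸ lt_irrefl _)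

theorem index_eq_prod_card_ribs (hL : ∀ K a, a ∈ L K ↔ s a < K)
    (hcover : ∀ a, s a ≠ ⊥ → ∃ i, s a = H i) (hH : StrictMono H) (N : AddSubgroup G)
    (hN : ∀ a, a ∈ N ↔ s a = ⊥) :
    N.index = ∏ i : Fin m, Nat.card (Quot fun a b : {x // s x ≤ H i} => s (a.1 - b.1) < H i) := by
  have hN0 : N = ribChain L H 0 := by ext a; rw [hN, mem_ribChain_zero hL hcover]
  rw [hN0, AddSubgroup.index_eq_prod_range ribChain_monotone (ribChain_eq_top le_rfl),
    ← Fin.prod_univ_eq_prod_range]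
  refine Finset.prod_congr rfl fun i _ => ?_
  have hle : (fun x => s x ≤ H i) = (· ∈ ribChain L H (i + 1)) :=
    funext fun x => propext (mem_ribChain_succ hL hcover hH i).symm
  rw [hle]
  simp only [← mem_ribChain_fin hL hH.monotone i]
  exact (AddSubgroup.card_quot_sub_mem_eq_relIndex _ _).symm

end Filtration

theorem stmt19_general {G : Type*} [AddCommGroup G] [LinearOrder G] [IsOrderedAddMonoid G] (n : ℕ)
    (s : G → WithBot (ConvexSubgroup G)) (hs : ∀ a : G, IsS n a (s a))
    (m : ℕ) (H : Fin m → ConvexSubgroup G) (hmono : StrictMono H)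
    (hcover : ∀ a : G, s a ≠ ⊥ → ∃ i : Fin m, s a = ↑(H i)) :
    Nat.card (G ⧸ mulSub G n) =
      ∏ i : Fin m,
        Nat.card (Quot (fun a b : {x : G // s x ≤ ↑(H i)} => s (a.1 - b.1) < ↑(H i))) := by
  rw [← AddSubgroup.index_eq_card]
  exact index_eq_prod_card_ribs (fun K a => (hs a).mem_sup_iff_lt K) hcover hmono _
    fun a => (hs a).mem_mulSub_iff

/-- If `𝒮ₙ \ {∅}` is finite, listed as `H 0 ⊊ H 1 ⊊ ⋯ ⊊ H (m-1)`, then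
`|G/nG| = ∏ᵢ |R_{Hᵢ}|`, where the rib `R_{Hᵢ}` is the quotient of
`{a : 𝔰ₙ(a) ≤ Hᵢ}` by the relation `a ~ b ↔ 𝔰ₙ(a - b) < Hᵢ` (i.e. by the
subgroup `{a : 𝔰ₙ(a) < Hᵢ}`). -/
theorem stmt19 {G : Type*} [AddCommGroup G] [LinearOrder G] [IsOrderedAddMonoid G] (n : ℕ) (hn : 2 ≤ n)
    (s : G → WithBot (ConvexSubgroup G)) (hs : ∀ a : G, IsS n a (s a))
    (m : ℕ) (H : Fin m → ConvexSubgroup G) (hmono : StrictMono H)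
    (himg : ∀ i : Fin m, ∃ a : G, s a = ↑(H i))
    (hcover : ∀ a : G, s a ≠ ⊥ → ∃ i : Fin m, s a = ↑(H i)) :
    Nat.card (G ⧸ mulSub G n) =
      ∏ i : Fin m,
        Nat.card (Quot (fun a b : {x : G // s x ≤ ↑(H i)} => s (a.1 - b.1) < ↑(H i))) :=
  stmt19_general n s hs m H hmono hcover
end
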